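/- (Interpolation relations (23)) Let q ∈ L²(0,2π) be real-valued, h, H ∈ ℝ, and suppose μ_n ≥ 1/2 and ν_n ≥ 1/2 for all n ≥ 1. Let φ, ψ, Δ be as in the transformation-operator setting and 𝓚₀, 𝓚 ∈ L²(0,π) the kernels representing φ(π,ρ) and φ'(π,ρ), and set ω₋ := h + (1/2)∫₀^π q(x)dx. Then for every n ≥ 1: ψ'(π,μ_n) ≠ 0, ψ(π,ν_n) ≠ 0, ∫₀^π 𝓚₀(t)·sin μ_n t dt = −μ_n( cos μ_nπ + ω₋·(sin μ_nπ)/μ_n + Δ(μ_n)/ψ'(π,μ_n) ), and ∫₀^π 𝓚(t)·cos ν_n t dt = ν_n·sin ν_nπ − ω₋·cos ν_nπ + Δ(ν_n)/ψ(π,ν_n). -/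

import Mathlib

open MeasureTheory Set Filter
open scoped Real

noncomputable section

/-- A solution pair `(y, y')` of the Sturm–Liouville equation `-y'' + q y = λ y` on `[a, b]`,
understood in the integral-equation sense. -/
def IsSLSolution (q : ℝ → ℝ) (lam : ℂ) (a b : ℝ) (y y' : ℝ → ℂ) : Prop :=
  (∀ x ∈ Set.Icc a b, y x = y a + ∫ t in a..x, y' t) ∧
  (∀ x ∈ Set.Icc a b, y' x = y' a + ∫ t in a..x, ((q t : ℂ) - lam) * y t)

/-- The `L²(a,b)` norm of a real-valued function. -/
def L2normOn (f : ℝ → ℝ) (a b : ℝ) : ℝ := Real.sqrt (∫ x in a..b, (f x) ^ 2)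

/-- Membership in `L²(a,b)`. -/
def MemL2 (f : ℝ → ℝ) (a b : ℝ) : Prop :=
  MemLp f 2 (volume.restrict (Set.Ioo a b))

/-- The `ℓ²` norm of a complex sequence. -/
def l2seqNorm (c : ℕ → ℂ) : ℝ := Real.sqrt (∑' n, ‖c n‖ ^ 2)

/-- The `ℓ²` norm of a real sequence. -/
def l2seqNormR (c : ℕ → ℝ) : ℝ := Real.sqrt (∑' n, (c n) ^ 2)

/-- `lam` is an eigenvalue of `-y'' + q y = lam y` on `[0, 2π]` with boundary conditions
`y'(0) = h y(0)`, `y'(2π) = -H y(2π)`. -/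
def IsEigenvalueFull (q : ℝ → ℝ) (h H lam : ℝ) : Prop :=
  ∃ y y' : ℝ → ℂ, IsSLSolution q (lam : ℂ) 0 (2 * π) y y' ∧
    (∃ x ∈ Set.Icc (0:ℝ) (2 * π), y x ≠ 0) ∧
    y' 0 = (h : ℂ) * y 0 ∧ y' (2 * π) = -(H : ℂ) * y (2 * π)

/-- `lam` is an eigenvalue of `-y'' + q y = lam y` on `[π, 2π]` with boundary conditions
`y(π) = 0`, `y'(2π) = -H y(2π)`. -/
def IsEigenvalueDir (q : ℝ → ℝ) (H lam : ℝ) : Prop :=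
  ∃ y y' : ℝ → ℂ, IsSLSolution q (lam : ℂ) π (2 * π) y y' ∧
    (∃ x ∈ Set.Icc π (2 * π), y x ≠ 0) ∧
    y π = 0 ∧ y' (2 * π) = -(H : ℂ) * y (2 * π)

/-- `lam` is an eigenvalue of `-y'' + q y = lam y` on `[π, 2π]` with boundary conditions
`y'(π) = 0`, `y'(2π) = -H y(2π)`. -/
def IsEigenvalueNeu (q : ℝ → ℝ) (H lam : ℝ) : Prop :=
  ∃ y y' : ℝ → ℂ, IsSLSolution q (lam : ℂ) π (2 * π) y y' ∧
    (∃ x ∈ Set.Icc π (2 * π), y x ≠ 0) ∧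
    y' π = 0 ∧ y' (2 * π) = -(H : ℂ) * y (2 * π)

/-- The sequence `ρ` (indexed so that `ρ n` is the mathematical `ρ_{n+1}`) belongs to `B_Ω`
with parameters `ω` and `κ`: `ρ_n = (n-1)/2 + ω/(πn) + κ_n/n`, `{κ_n} ∈ ℓ²`,
and `|ω| + ‖{κ_n}‖_{ℓ²} ≤ Ω`. -/
def BOmegaMem (ρ : ℕ → ℝ) (ω : ℝ) (κ : ℕ → ℝ) (Ω : ℝ) : Prop :=
  (∀ n : ℕ, ρ n = (n : ℝ) / 2 + ω / (π * ((n : ℝ) + 1)) + κ n / ((n : ℝ) + 1)) ∧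
  Summable (fun n => (κ n) ^ 2) ∧ |ω| + l2seqNormR κ ≤ Ω

/-- The `n`-th factor (indexed so that `n : ℕ` is the mathematical index `n+1`) of the
Hadamard product `∏_{n≥1} (ρ_{n+1}² - z²)/((n/2)²)`. -/
def hadamardFactor (ρ : ℕ → ℝ) (z : ℂ) (k : ℕ) : ℂ :=
  (((ρ (k + 1) : ℝ) : ℂ) ^ 2 - z ^ 2) / (((((k : ℝ) + 1) / 2 : ℝ) : ℂ) ^ 2)

/-- The infinite product `Δ(z) = 2π(ρ₁² - z²)·∏_{n≥1} (ρ_{n+1}² - z²)/((n/2)²)`. -/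
def DeltaProd (ρ : ℕ → ℝ) (z : ℂ) : ℂ :=
  2 * (π : ℂ) * (((ρ 0 : ℝ) : ℂ) ^ 2 - z ^ 2) * ∏' k, hadamardFactor ρ z k

/-!
An eigenfunction for `μ_n²` (resp. `ν_n²`) solves the same equation on `[π, 2π]` as `ψ(·, μ_n)`
with the same Robin condition at `2π`, so by uniqueness for the Cauchy problem it is a nonzero
multiple of `ψ`. Hence `ψ(π, μ_n) = 0`, and `ψ'(π, μ_n) ≠ 0` because `ψ ≢ 0`; dually
`ψ'(π, ν_n) = 0 ≠ ψ(π, ν_n)`. Then `Δ(μ_n) / ψ'(π, μ_n) = -φ(π, μ_n)` and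
`Δ(ν_n) / ψ(π, ν_n) = φ'(π, ν_n)`, and the relations are the representations of `φ(π, ·)` and
`φ'(π, ·)` rearranged.

Uniqueness for `u'' = k u` with merely integrable `k` comes from a local Gronwall bound on
intervals `J` with `|J| + ∫_J ‖k‖ < 1`, spread over `[a, b]` by connectedness. The integral form
does not presuppose that `u'` is integrable (a non-integrable integrand integrates to `0`), so
continuity of solutions is proved first, by continuation up to the supremum of the points `x`
for which `u'` is integrable on `[a, x]`.
-/

open Topology intervalIntegral
open scoped Interval

def IsSecondOrderSolution (k : ℝ → ℂ) (a b : ℝ) (u u' : ℝ → ℂ) : Prop :=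
  (∀ x ∈ Icc a b, u x = u a + ∫ t in a..x, u' t) ∧
  (∀ x ∈ Icc a b, u' x = u' a + ∫ t in a..x, k t * u t)

theorem isSLSolution_iff {q : ℝ → ℝ} {lam : ℂ} {a b : ℝ} {y y' : ℝ → ℂ} :
    IsSLSolution q lam a b y y' ↔ IsSecondOrderSolution (fun t => (q t : ℂ) - lam) a b y y' :=
  Iff.rfl

theorem continuousOn_of_eq_add_integral {f g : ℝ → ℂ} {a b : ℝ} (hab : a ≤ b)
    (hg : IntervalIntegrable g volume a b) (hf : ∀ x ∈ Icc a b, f x = f a + ∫ t in a..x, g t) :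
    ContinuousOn f (Icc a b) := by
  have hprim := continuousOn_primitive_interval' hg left_mem_uIcc
  rw [uIcc_of_le hab] at hprim
  exact (continuousOn_const.add hprim).congr hf

theorem eq_add_integral_of_mem_Icc {f g : ℝ → ℂ} {a b p x : ℝ}
    (hg : IntervalIntegrable g volume a b) (hf : ∀ x ∈ Icc a b, f x = f a + ∫ t in a..x, g t)
    (hp : p ∈ Icc a b) (hx : x ∈ Icc a b) : f x = f p + ∫ t in p..x, g t := by
  have hgp := hg.mono_set (uIcc_subset_uIcc left_mem_uIcc (Icc_subset_uIcc hp))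
  have hgx := hg.mono_set (uIcc_subset_uIcc left_mem_uIcc (Icc_subset_uIcc hx))
  rw [hf x hx, hf p hp, ← integral_interval_sub_left hgx hgp]
  ring

theorem eventually_abs_sub_add_abs_integral_lt {k : ℝ → ℂ} {a b x ε : ℝ}
    (hk : IntervalIntegrable k volume a b) (hx : x ∈ Icc a b) (hε : 0 < ε) :
    ∀ᶠ y in 𝓝[Icc a b] x, |y - x| + |∫ t in x..y, ‖k t‖| < ε := by
  have hprim := (continuousOn_primitive_interval' hk.norm (Icc_subset_uIcc hx)).mono
    Icc_subset_uIcc x hx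
  have hcont := ((continuous_sub_right x).abs.continuousWithinAt (s := Icc a b)).add hprim.abs
  exact hcont (Iio_mem_nhds (by simpa using hε))

/-- Local Gronwall bound: once `|J| + ∫_J ‖k‖ < 1`, the Cauchy data at any `p ∈ J` control the
solution on `J`. -/
theorem one_sub_mul_norm_add_norm_le {u u' k : ℝ → ℂ} {T d p x : ℝ}
    (hk : IntervalIntegrable k volume T d)
    (hu : ContinuousOn u [[T, d]]) (hu' : ContinuousOn u' [[T, d]])
    (h₁ : ∀ x ∈ [[T, d]], u x = u p + ∫ t in p..x, u' t)
    (h₂ : ∀ x ∈ [[T, d]], u' x = u' p + ∫ t in p..x, k t * u t)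
    (hp : p ∈ [[T, d]]) (hx : x ∈ [[T, d]]) :
    (1 - (|d - T| + |∫ t in T..d, ‖k t‖|)) * (‖u x‖ + ‖u' x‖) ≤ ‖u p‖ + ‖u' p‖ := by
  obtain ⟨z, hz, hmax⟩ := isCompact_uIcc.exists_isMaxOn nonempty_uIcc (hu.norm.add hu'.norm)
  set M := ‖u z‖ + ‖u' z‖
  have hM : ∀ t ∈ [[T, d]], ‖u t‖ + ‖u' t‖ ≤ M := fun t ht => hmax ht
  have hM0 : 0 ≤ M := by positivity
  have hpz : [[p, z]] ⊆ [[T, d]] := uIcc_subset_uIcc hp hz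
  have hu_z : ‖u z‖ ≤ ‖u p‖ + M * |d - T| := by
    rw [h₁ z hz]
    refine (norm_add_le _ _).trans (add_le_add_right ?_ _)
    calc ‖∫ t in p..z, u' t‖ ≤ M * |z - p| :=
          norm_integral_le_of_norm_le_const fun t ht =>
            (le_add_of_nonneg_left (norm_nonneg _)).trans (hM t (hpz (uIoc_subset_uIcc ht)))
      _ ≤ M * |d - T| := mul_le_mul_of_nonneg_left (abs_sub_le_of_uIcc_subset_uIcc hpz) hM0
  have hu'_z : ‖u' z‖ ≤ ‖u' p‖ + M * |∫ t in T..d, ‖k t‖| := by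
    rw [h₂ z hz]
    refine (norm_add_le _ _).trans (add_le_add_right ?_ _)
    have hbound : ∀ᵐ t ∂volume.restrict (Ι p z), ‖k t * u t‖ ≤ ‖k t‖ * M :=
      ae_restrict_of_forall_mem measurableSet_uIoc fun t ht => by
        rw [norm_mul]
        exact mul_le_mul_of_nonneg_left
          ((le_add_of_nonneg_right (norm_nonneg _)).trans (hM t (hpz (uIoc_subset_uIcc ht))))
          (norm_nonneg _)
    calc ‖∫ t in p..z, k t * u t‖ ≤ |∫ t in p..z, ‖k t‖ * M| :=
          norm_integral_le_abs_of_norm_le hbound ((hk.norm.mono_set hpz).mul_const M)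
      _ = M * |∫ t in p..z, ‖k t‖| := by
          rw [intervalIntegral.integral_mul_const, abs_mul, abs_of_nonneg hM0, mul_comm]
      _ ≤ M * |∫ t in T..d, ‖k t‖| :=
          mul_le_mul_of_nonneg_left (abs_integral_mono_interval
            (uIoc_subset_uIoc_of_uIcc_subset_uIcc hpz)
            (Eventually.of_forall fun t => norm_nonneg _) hk.norm) hM0
  have hx_le := hM x hx
  by_cases hθ : 0 ≤ 1 - (|d - T| + |∫ t in T..d, ‖k t‖|)
  · nlinarith
  · nlinarith [norm_nonneg (u x), norm_nonneg (u' x), norm_nonneg (u p), norm_nonneg (u' p)]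

namespace IsSecondOrderSolution

variable {k u u' : ℝ → ℂ} {a b : ℝ}

theorem continuousOn_of_intervalIntegrable (hsol : IsSecondOrderSolution k a b u u')
    (hk : IntervalIntegrable k volume a b) {x : ℝ} (hx : x ∈ Icc a b)
    (hu' : IntervalIntegrable u' volume a x) :
    ContinuousOn u (Icc a x) ∧ ContinuousOn u' (Icc a x) := by
  have hsub : Icc a x ⊆ Icc a b := Icc_subset_Icc_right hx.2
  have hu := continuousOn_of_eq_add_integral hx.1 hu' fun t ht => hsol.1 t (hsub ht)
  refine ⟨hu, continuousOn_of_eq_add_integral hx.1 ?_ fun t ht => hsol.2 t (hsub ht)⟩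
  rw [← uIcc_of_le hx.1] at hsub hu
  exact (hk.mono_set (hsub.trans Icc_subset_uIcc)).mul_continuousOn hu

theorem one_sub_mul_norm_add_norm_le (hsol : IsSecondOrderSolution k a b u u')
    (hk : IntervalIntegrable k volume a b) {T x : ℝ} (haT : a ≤ T) (hTx : T ≤ x) (hxb : x ≤ b)
    (hu' : IntervalIntegrable u' volume a x) :
    (1 - (|x - T| + |∫ t in T..x, ‖k t‖|)) * (‖u x‖ + ‖u' x‖) ≤ ‖u T‖ + ‖u' T‖ := by
  have hx : x ∈ Icc a b := ⟨haT.trans hTx, hxb⟩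
  have hsub : Icc a x ⊆ Icc a b := Icc_subset_Icc_right hxb
  obtain ⟨hu, hu'c⟩ := hsol.continuousOn_of_intervalIntegrable hk hx hu'
  have hTx' : [[T, x]] ⊆ Icc a x := by
    rw [uIcc_of_le hTx]; exact Icc_subset_Icc_left haT
  have hTmem : T ∈ Icc a x := ⟨haT, hTx⟩
  have hkx : IntervalIntegrable k volume a x :=
    hk.mono_set (uIcc_subset_uIcc left_mem_uIcc (Icc_subset_uIcc hx))
  have hkux : IntervalIntegrable (fun t => k t * u t) volume a x :=
    hkx.mul_continuousOn (by rwa [uIcc_of_le hx.1])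
  exact _root_.one_sub_mul_norm_add_norm_le (hkx.mono_set (hTx'.trans Icc_subset_uIcc))
    (hu.mono hTx') (hu'c.mono hTx')
    (fun y hy => eq_add_integral_of_mem_Icc hu' (fun t ht => hsol.1 t (hsub ht)) hTmem (hTx' hy))
    (fun y hy => eq_add_integral_of_mem_Icc hkux (fun t ht => hsol.2 t (hsub ht)) hTmem
      (hTx' hy))
    left_mem_uIcc right_mem_uIcc

theorem intervalIntegrable_of_forall_lt (hsol : IsSecondOrderSolution k a b u u')
    (hk : IntervalIntegrable k volume a b) {c : ℝ} (hc : c ∈ Icc a b) (hac : a < c)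
    (h : ∀ x ∈ Ico a c, IntervalIntegrable u' volume a x) :
    IntervalIntegrable u' volume a c := by
  have hnhds : 𝓝[<] c ≤ 𝓝[Icc a b] c := nhdsWithin_le_of_mem <| mem_of_superset
    (Ioo_mem_nhdsLT hac) (Ioo_subset_Icc_self.trans (Icc_subset_Icc_right hc.2))
  obtain ⟨T, hsmall, hT⟩ := (((eventually_abs_sub_add_abs_integral_lt hk hc
    one_half_pos).filter_mono hnhds).and (Ioo_mem_nhdsLT hac)).exists
  have hbound : ∀ x ∈ Ico T c, ‖u' x‖ ≤ 2 * (‖u T‖ + ‖u' T‖) := by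
    intro x hx
    have key := hsol.one_sub_mul_norm_add_norm_le hk hT.1.le hx.1 (hx.2.le.trans hc.2)
      (h x ⟨hT.1.le.trans hx.1, hx.2⟩)
    have hθ : |x - T| + |∫ t in T..x, ‖k t‖| ≤ 1 / 2 := by
      have hint : |∫ t in T..x, ‖k t‖| ≤ |∫ t in c..T, ‖k t‖| := by
        rw [integral_symm T c, abs_neg]
        refine abs_integral_mono_interval ?_ (Eventually.of_forall fun t => norm_nonneg _)
          (hk.norm.mono_set (uIcc_subset_Icc ⟨hT.1.le, hT.2.le.trans hc.2⟩ hc |>.trans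
            Icc_subset_uIcc))
        rw [uIoc_of_le hx.1, uIoc_of_le hT.2.le]
        exact Ioc_subset_Ioc_right hx.2.le
      rw [abs_of_nonneg (sub_nonneg.2 hx.1)]
      rw [abs_sub_comm, abs_of_pos (sub_pos.2 hT.2)] at hsmall
      linarith [hx.2]
    nlinarith [norm_nonneg (u x), norm_nonneg (u' x)]
  have hcont : ContinuousOn u' (Ico a c) := by
    refine continuousOn_of_locally_continuousOn fun z hz => ⟨Iio ((z + c) / 2), isOpen_Iio,
      by simp only [mem_Iio]; linarith [hz.2], ?_⟩
    have hm : (z + c) / 2 ∈ Ico a c := ⟨by linarith [hz.1, hz.2], by linarith [hz.2]⟩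
    exact (hsol.continuousOn_of_intervalIntegrable hk ⟨hm.1, hm.2.le.trans hc.2⟩ (h _ hm)).2.mono
      fun w hw => ⟨hw.1.1, hw.2.le⟩
  have hTc : IntervalIntegrable u' volume T c := by
    rw [intervalIntegrable_iff_integrableOn_Ioo_of_le hT.2.le]
    exact IntegrableOn.of_bound measure_Ioo_lt_top
      ((hcont.mono fun w hw => ⟨hT.1.le.trans hw.1.le, hw.2⟩).aestronglyMeasurable
        measurableSet_Ioo) _
      (ae_restrict_of_forall_mem measurableSet_Ioo fun x hx => hbound x ⟨hx.1.le, hx.2⟩)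
  exact (h T ⟨hT.1.le, hT.2⟩).trans hTc

theorem continuousOn (hsol : IsSecondOrderSolution k a b u u')
    (hk : IntervalIntegrable k volume a b) (hab : a ≤ b) :
    ContinuousOn u (Icc a b) ∧ ContinuousOn u' (Icc a b) := by
  suffices h : IntervalIntegrable u' volume a b from
    hsol.continuousOn_of_intervalIntegrable hk (right_mem_Icc.2 hab) h
  set I := {x ∈ Icc a b | IntervalIntegrable u' volume a x}
  have haI : a ∈ I := ⟨left_mem_Icc.2 hab, IntervalIntegrable.refl⟩
  have hbdd : BddAbove I := ⟨b, fun x hx => hx.1.2⟩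
  set c := sSup I
  have hc : c ∈ Icc a b := ⟨le_csSup hbdd haI, csSup_le ⟨a, haI⟩ fun x hx => hx.1.2⟩
  have hIco : ∀ x ∈ Ico a c, IntervalIntegrable u' volume a x := fun x hx => by
    obtain ⟨z, hz, hxz⟩ := exists_lt_of_lt_csSup ⟨a, haI⟩ hx.2
    exact hz.2.mono_set (uIcc_subset_uIcc left_mem_uIcc (Icc_subset_uIcc ⟨hx.1, hxz.le⟩))
  have hcI : IntervalIntegrable u' volume a c := by
    rcases hc.1.eq_or_lt with hac | hac
    · rw [← hac]
    · exact hsol.intervalIntegrable_of_forall_lt hk hc hac hIco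
  -- Past `c` the integral `∫ a..x, u'` is the junk value `0`, so `u` is frozen at `u a`.
  have hconst : EqOn (fun t => k t * u a) (fun t => k t * u t) (Ι c b) := by
    intro x hx
    rw [uIoc_of_le hc.2] at hx
    have hxab : x ∈ Icc a b := ⟨hc.1.trans hx.1.le, hx.2⟩
    have hnot : ¬IntervalIntegrable u' volume a x := fun hint =>
      (le_csSup hbdd ⟨hxab, hint⟩).not_gt hx.1
    simp only
    rw [hsol.1 x hxab, integral_undef hnot, add_zero]
  have hku : IntervalIntegrable (fun t => k t * u t) volume a b := by
    have hkac := hk.mono_set (uIcc_subset_uIcc left_mem_uIcc (Icc_subset_uIcc hc))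
    have hkcb := hk.mono_set (uIcc_subset_uIcc (Icc_subset_uIcc hc) right_mem_uIcc)
    refine (hkac.mul_continuousOn ?_).trans ((hkcb.mul_const (u a)).congr hconst)
    rw [uIcc_of_le hc.1]
    exact (hsol.continuousOn_of_intervalIntegrable hk hc hcI).1
  exact (continuousOn_of_eq_add_integral hab hku hsol.2).intervalIntegrable_of_Icc hab

theorem eqOn_zero (hsol : IsSecondOrderSolution k a b u u') (hk : IntervalIntegrable k volume a b)
    (hab : a ≤ b) {p : ℝ} (hp : p ∈ Icc a b) (hup : u p = 0) (hu'p : u' p = 0) :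
    ∀ x ∈ Icc a b, u x = 0 ∧ u' x = 0 := by
  obtain ⟨hu, hu'⟩ := hsol.continuousOn hk hab
  have hu'i : IntervalIntegrable u' volume a b := hu'.intervalIntegrable_of_Icc hab
  have hkui : IntervalIntegrable (fun t => k t * u t) volume a b :=
    hk.mul_continuousOn (by rwa [uIcc_of_le hab])
  have hlocal : ∀ x ∈ Icc a b, ∀ y ∈ Icc a b, |y - x| + |∫ t in x..y, ‖k t‖| < 1 →
      ∀ z ∈ [[x, y]], ∀ w ∈ [[x, y]], u z = 0 ∧ u' z = 0 → u w = 0 ∧ u' w = 0 := by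
    rintro x hx y hy hθ z hz w hw ⟨hz0, hz0'⟩
    have hsub : [[x, y]] ⊆ Icc a b := uIcc_subset_Icc hx hy
    have key := _root_.one_sub_mul_norm_add_norm_le (hk.mono_set (hsub.trans Icc_subset_uIcc))
      (hu.mono hsub) (hu'.mono hsub)
      (fun v hv => eq_add_integral_of_mem_Icc hu'i hsol.1 (hsub hz) (hsub hv))
      (fun v hv => eq_add_integral_of_mem_Icc hkui hsol.2 (hsub hz) (hsub hv)) hz hw
    rw [hz0, hz0', norm_zero, add_zero] at key
    have hw0 : ‖u w‖ + ‖u' w‖ ≤ 0 := nonpos_of_mul_nonpos_right key (by linarith)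
    constructor <;> rw [← norm_eq_zero] <;> linarith [norm_nonneg (u w), norm_nonneg (u' w)]
  refine fun x hx => isPreconnected_Icc.induction₂'
    (fun z w => u z = 0 ∧ u' z = 0 → u w = 0 ∧ u' w = 0) (fun z hz => ?_)
    (fun _ _ _ _ _ _ hzw hwv h => hwv (hzw h)) hp hx ⟨hup, hu'p⟩
  filter_upwards [eventually_abs_sub_add_abs_integral_lt hk hz one_pos, self_mem_nhdsWithin]
    with w hθ hw
  exact ⟨hlocal z hz w hw hθ z left_mem_uIcc w right_mem_uIcc,
    hlocal z hz w hw hθ w right_mem_uIcc z left_mem_uIcc⟩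

theorem sub_const_mul {ψ ψ' : ℝ → ℂ} (hu : IsSecondOrderSolution k a b u u')
    (hψ : IsSecondOrderSolution k a b ψ ψ') (hk : IntervalIntegrable k volume a b) (hab : a ≤ b)
    (c : ℂ) :
    IsSecondOrderSolution k a b (fun x => u x - c * ψ x) (fun x => u' x - c * ψ' x) := by
  obtain ⟨huc, hu'c⟩ := hu.continuousOn hk hab
  obtain ⟨hψc, hψ'c⟩ := hψ.continuousOn hk hab
  have hint : ∀ {f : ℝ → ℂ}, ContinuousOn f (Icc a b) → ∀ x ∈ Icc a b,
      IntervalIntegrable f volume a x ∧ IntervalIntegrable (fun t => k t * f t) volume a x :=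
    fun hf x hx => by
      have hsub : [[a, x]] ⊆ Icc a b := uIcc_subset_Icc (left_mem_Icc.2 hab) hx
      exact ⟨(hf.mono hsub).intervalIntegrable,
        (hk.mono_set (hsub.trans Icc_subset_uIcc)).mul_continuousOn (hf.mono hsub)⟩
  constructor
  · intro x hx
    simp only
    rw [integral_sub (hint hu'c x hx).1 ((hint hψ'c x hx).1.const_mul c),
      intervalIntegral.integral_const_mul, hu.1 x hx, hψ.1 x hx]
    ring
  · intro x hx
    have hlin : (fun t => k t * (u t - c * ψ t)) = fun t => k t * u t - c * (k t * ψ t) := by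
      ext t; ring
    simp only
    rw [hlin, integral_sub (hint huc x hx).2 ((hint hψc x hx).2.const_mul c),
      intervalIntegral.integral_const_mul, hu.2 x hx, hψ.2 x hx]
    ring

theorem eqOn_const_mul {ψ ψ' : ℝ → ℂ} (hu : IsSecondOrderSolution k a b u u')
    (hψ : IsSecondOrderSolution k a b ψ ψ') (hk : IntervalIntegrable k volume a b) (hab : a ≤ b)
    {p : ℝ} (hp : p ∈ Icc a b) {c : ℂ} (h : u p = c * ψ p) (h' : u' p = c * ψ' p) :
    ∀ x ∈ Icc a b, u x = c * ψ x ∧ u' x = c * ψ' x := fun x hx => by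
  have hx0 := (hu.sub_const_mul hψ hk hab c).eqOn_zero hk hab hp (sub_eq_zero.2 h)
    (sub_eq_zero.2 h') x hx
  exact ⟨sub_eq_zero.1 hx0.1, sub_eq_zero.1 hx0.2⟩

theorem deriv_ne_zero_of_eq_zero (hu : IsSecondOrderSolution k a b u u')
    (hk : IntervalIntegrable k volume a b) (hb : u b ≠ 0) {p : ℝ} (hp : p ∈ Icc a b)
    (hup : u p = 0) : u' p ≠ 0 := fun hu'p =>
  hb (hu.eqOn_zero hk (hp.1.trans hp.2) hp hup hu'p b (right_mem_Icc.2 (hp.1.trans hp.2))).1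

theorem exists_ne_zero_eqOn_mul_of_robin {H : ℂ} {ψ ψ' : ℝ → ℂ}
    (hψ : IsSecondOrderSolution k a b ψ ψ') (hψb : ψ b = 1) (hψ'b : ψ' b = -H)
    (hu : IsSecondOrderSolution k a b u u') (hub : u' b = -H * u b)
    (hnt : ∃ x ∈ Icc a b, u x ≠ 0) (hk : IntervalIntegrable k volume a b) (hab : a ≤ b) :
    ∃ c ≠ 0, ∀ x ∈ Icc a b, u x = c * ψ x ∧ u' x = c * ψ' x := by
  have hprop := hu.eqOn_const_mul hψ hk hab (right_mem_Icc.2 hab) (c := u b)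
    (by rw [hψb, mul_one]) (by rw [hub, hψ'b]; ring)
  obtain ⟨x, hx, hux⟩ := hnt
  exact ⟨u b, fun h0 => hux (by rw [(hprop x hx).1, h0, zero_mul]), hprop⟩

end IsSecondOrderSolution

theorem MemL2.intervalIntegrable_sub_const {q : ℝ → ℝ} {a b : ℝ} (hq : MemL2 q a b) (hab : a ≤ b)
    (lam : ℂ) : IntervalIntegrable (fun t => (q t : ℂ) - lam) volume a b := by
  rw [intervalIntegrable_iff_integrableOn_Ioo_of_le hab]
  exact (hq.integrable one_le_two).ofReal.sub (integrableOn_const measure_Ioo_lt_top.ne)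

section Eigenvalues

variable {q : ℝ → ℝ} {H lam : ℝ} {ψ ψ' : ℝ → ℂ}

theorem IsEigenvalueDir.eq_zero_and_deriv_ne_zero (hlam : IsEigenvalueDir q H lam)
    (hq : IntervalIntegrable (fun t => (q t : ℂ) - lam) volume π (2 * π))
    (hψ : IsSLSolution q lam π (2 * π) ψ ψ') (hψb : ψ (2 * π) = 1) (hψ'b : ψ' (2 * π) = -H) :
    ψ π = 0 ∧ ψ' π ≠ 0 := by
  have hab : π ≤ 2 * π := by linarith [Real.pi_pos]
  obtain ⟨y, y', hy, hnt, hyπ, hybc⟩ := hlam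
  obtain ⟨c, hc, hyψ⟩ := IsSecondOrderSolution.exists_ne_zero_eqOn_mul_of_robin
    (isSLSolution_iff.1 hψ) hψb hψ'b hy hybc hnt hq hab
  have hψπ : ψ π = 0 := by
    have := (hyψ π (left_mem_Icc.2 hab)).1
    rw [hyπ] at this
    exact (mul_eq_zero.1 this.symm).resolve_left hc
  exact ⟨hψπ, (isSLSolution_iff.1 hψ).deriv_ne_zero_of_eq_zero hq (by simp [hψb])
    (left_mem_Icc.2 hab) hψπ⟩

theorem IsEigenvalueNeu.deriv_eq_zero_and_ne_zero (hlam : IsEigenvalueNeu q H lam)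
    (hq : IntervalIntegrable (fun t => (q t : ℂ) - lam) volume π (2 * π))
    (hψ : IsSLSolution q lam π (2 * π) ψ ψ') (hψb : ψ (2 * π) = 1) (hψ'b : ψ' (2 * π) = -H) :
    ψ' π = 0 ∧ ψ π ≠ 0 := by
  have hab : π ≤ 2 * π := by linarith [Real.pi_pos]
  obtain ⟨y, y', hy, hnt, hy'π, hybc⟩ := hlam
  obtain ⟨c, hc, hyψ⟩ := IsSecondOrderSolution.exists_ne_zero_eqOn_mul_of_robin
    (isSLSolution_iff.1 hψ) hψb hψ'b hy hybc hnt hq hab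
  have hψ'π : ψ' π = 0 := by
    have := (hyψ π (left_mem_Icc.2 hab)).2
    rw [hy'π] at this
    exact (mul_eq_zero.1 this.symm).resolve_left hc
  exact ⟨hψ'π, fun hψπ => (isSLSolution_iff.1 hψ).deriv_ne_zero_of_eq_zero hq (by simp [hψb])
    (left_mem_Icc.2 hab) hψπ hψ'π⟩

end Eigenvalues

theorem ofReal_integral_mul_sin (f : ℝ → ℝ) (r a b : ℝ) :
    ((∫ t in a..b, f t * Real.sin (r * t) : ℝ) : ℂ) =
      ∫ t in a..b, (f t : ℂ) * Complex.sin ((r : ℂ) * (t : ℂ)) := by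
  rw [← intervalIntegral.integral_ofReal]
  push_cast
  rfl

theorem ofReal_integral_mul_cos (f : ℝ → ℝ) (r a b : ℝ) :
    ((∫ t in a..b, f t * Real.cos (r * t) : ℝ) : ℂ) =
      ∫ t in a..b, (f t : ℂ) * Complex.cos ((r : ℂ) * (t : ℂ)) := by
  rw [← intervalIntegral.integral_ofReal]
  push_cast
  rfl

/-- Sequences are indexed so that `n : ℕ` corresponds to the mathematical index `n + 1`. -/
theorem interpolation_relations_general (q : ℝ → ℝ) (H : ℝ) (φ φ' ψ ψ' : ℂ → ℝ → ℂ)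
    (μsq νsq μ ν : ℕ → ℝ) (K0 K : ℝ → ℝ) (ωm : ℝ)
    (hq : MemL2 q 0 (2 * π))
    (hψ : ∀ ρ : ℂ, IsSLSolution q (ρ ^ 2) π (2 * π) (ψ ρ) (ψ' ρ) ∧
      ψ ρ (2 * π) = 1 ∧ ψ' ρ (2 * π) = -(H : ℂ))
    (hμspec : ∀ lam : ℝ, IsEigenvalueDir q H lam ↔ ∃ n, μsq n = lam)
    (hνspec : ∀ lam : ℝ, IsEigenvalueNeu q H lam ↔ ∃ n, νsq n = lam)
    (hμ : ∀ n, 0 ≤ μ n ∧ (μ n) ^ 2 = μsq n)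
    (hν : ∀ n, 0 ≤ ν n ∧ (ν n) ^ 2 = νsq n)
    (hμhalf : ∀ n, 1 / 2 ≤ μ n) (hνhalf : ∀ n, 1 / 2 ≤ ν n)
    (hK0 : ∀ ρ : ℂ, ρ ≠ 0 →
      φ ρ π = Complex.cos (ρ * (π : ℂ)) + (ωm : ℂ) * Complex.sin (ρ * (π : ℂ)) / ρ +
        (1 / ρ) * ∫ t in (0:ℝ)..π, (K0 t : ℂ) * Complex.sin (ρ * (t : ℂ)))
    (hK : ∀ ρ : ℂ, ρ ≠ 0 →
      φ' ρ π = -ρ * Complex.sin (ρ * (π : ℂ)) + (ωm : ℂ) * Complex.cos (ρ * (π : ℂ)) +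
        ∫ t in (0:ℝ)..π, (K t : ℂ) * Complex.cos (ρ * (t : ℂ))) :
    ∀ n : ℕ,
      ψ' (μ n : ℂ) π ≠ 0 ∧ ψ (ν n : ℂ) π ≠ 0 ∧
      ((∫ t in (0:ℝ)..π, K0 t * Real.sin (μ n * t) : ℝ) : ℂ) =
        -(μ n : ℂ) * (Complex.cos ((μ n : ℂ) * (π : ℂ)) +
          (ωm : ℂ) * Complex.sin ((μ n : ℂ) * (π : ℂ)) / (μ n : ℂ) +
          (φ' (μ n : ℂ) π * ψ (μ n : ℂ) π - φ (μ n : ℂ) π * ψ' (μ n : ℂ) π) /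
            ψ' (μ n : ℂ) π) ∧
      ((∫ t in (0:ℝ)..π, K t * Real.cos (ν n * t) : ℝ) : ℂ) =
        (ν n : ℂ) * Complex.sin ((ν n : ℂ) * (π : ℂ)) -
          (ωm : ℂ) * Complex.cos ((ν n : ℂ) * (π : ℂ)) +
          (φ' (ν n : ℂ) π * ψ (ν n : ℂ) π - φ (ν n : ℂ) π * ψ' (ν n : ℂ) π) /
            ψ (ν n : ℂ) π := by
  intro n
  have hint (lam : ℂ) : IntervalIntegrable (fun t => (q t : ℂ) - lam) volume π (2 * π) :=
    (hq.intervalIntegrable_sub_const (by positivity) lam).mono_set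
      (uIcc_subset_uIcc (by simp [Real.pi_pos.le, two_mul]) right_mem_uIcc)
  have hψsq {r s : ℝ} (hrs : r ^ 2 = s) :
      IsSLSolution q (s : ℂ) π (2 * π) (ψ r) (ψ' r) := by
    simpa [← hrs] using (hψ r).1
  obtain ⟨hψμ, hψ'μ⟩ := ((hμspec _).2 ⟨n, rfl⟩).eq_zero_and_deriv_ne_zero (hint _)
    (hψsq (hμ n).2) (hψ _).2.1 (hψ _).2.2
  obtain ⟨hψ'ν, hψν⟩ := ((hνspec _).2 ⟨n, rfl⟩).deriv_eq_zero_and_ne_zero (hint _)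
    (hψsq (hν n).2) (hψ _).2.1 (hψ _).2.2
  have hμ0 : (μ n : ℂ) ≠ 0 := Complex.ofReal_ne_zero.2 (by linarith [hμhalf n])
  have hν0 : (ν n : ℂ) ≠ 0 := Complex.ofReal_ne_zero.2 (by linarith [hνhalf n])
  refine ⟨hψ'μ, hψν, ?_, ?_⟩
  · rw [ofReal_integral_mul_sin, hψμ, hK0 _ hμ0]
    field_simp
    ring
  · rw [ofReal_integral_mul_cos, hψ'ν, hK _ hν0]
    field_simp
    ring

/-- **Interpolation relations (23)**: evaluating the representations of `φ(π,·)`, `φ'(π,·)`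
at the zeros `μ_n`, `ν_n` of `ψ'(π,·)` and `ψ(π,·)`. Sequences are indexed so that
`n : ℕ` corresponds to the mathematical index `n + 1`. -/
theorem interpolation_relations (q : ℝ → ℝ) (h H : ℝ) (φ φ' ψ ψ' : ℂ → ℝ → ℂ)
    (μsq νsq μ ν : ℕ → ℝ) (K0 K : ℝ → ℝ) (ωm : ℝ)
    (hq : MemL2 q 0 (2 * π))
    (hφ : ∀ ρ : ℂ, IsSLSolution q (ρ ^ 2) 0 π (φ ρ) (φ' ρ) ∧
      φ ρ 0 = 1 ∧ φ' ρ 0 = (h : ℂ))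
    (hψ : ∀ ρ : ℂ, IsSLSolution q (ρ ^ 2) π (2 * π) (ψ ρ) (ψ' ρ) ∧
      ψ ρ (2 * π) = 1 ∧ ψ' ρ (2 * π) = -(H : ℂ))
    (hμsq : StrictMono μsq) (hμspec : ∀ lam : ℝ, IsEigenvalueDir q H lam ↔ ∃ n, μsq n = lam)
    (hνsq : StrictMono νsq) (hνspec : ∀ lam : ℝ, IsEigenvalueNeu q H lam ↔ ∃ n, νsq n = lam)
    (hμ : ∀ n, 0 ≤ μ n ∧ (μ n) ^ 2 = μsq n)
    (hν : ∀ n, 0 ≤ ν n ∧ (ν n) ^ 2 = νsq n)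
    (hμhalf : ∀ n, 1 / 2 ≤ μ n) (hνhalf : ∀ n, 1 / 2 ≤ ν n)
    (hωm : ωm = h + (1 / 2) * ∫ x in (0:ℝ)..π, q x)
    (hK0mem : MemL2 K0 0 π) (hKmem : MemL2 K 0 π)
    (hK0 : ∀ ρ : ℂ, ρ ≠ 0 →
      φ ρ π = Complex.cos (ρ * (π : ℂ)) + (ωm : ℂ) * Complex.sin (ρ * (π : ℂ)) / ρ +
        (1 / ρ) * ∫ t in (0:ℝ)..π, (K0 t : ℂ) * Complex.sin (ρ * (t : ℂ)))
    (hK : ∀ ρ : ℂ, ρ ≠ 0 →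
      φ' ρ π = -ρ * Complex.sin (ρ * (π : ℂ)) + (ωm : ℂ) * Complex.cos (ρ * (π : ℂ)) +
        ∫ t in (0:ℝ)..π, (K t : ℂ) * Complex.cos (ρ * (t : ℂ))) :
    ∀ n : ℕ,
      ψ' (μ n : ℂ) π ≠ 0 ∧ ψ (ν n : ℂ) π ≠ 0 ∧
      ((∫ t in (0:ℝ)..π, K0 t * Real.sin (μ n * t) : ℝ) : ℂ) =
        -(μ n : ℂ) * (Complex.cos ((μ n : ℂ) * (π : ℂ)) +
          (ωm : ℂ) * Complex.sin ((μ n : ℂ) * (π : ℂ)) / (μ n : ℂ) +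
          (φ' (μ n : ℂ) π * ψ (μ n : ℂ) π - φ (μ n : ℂ) π * ψ' (μ n : ℂ) π) /
            ψ' (μ n : ℂ) π) ∧
      ((∫ t in (0:ℝ)..π, K t * Real.cos (ν n * t) : ℝ) : ℂ) =
        (ν n : ℂ) * Complex.sin ((ν n : ℂ) * (π : ℂ)) -
          (ωm : ℂ) * Complex.cos ((ν n : ℂ) * (π : ℂ)) +
          (φ' (ν n : ℂ) π * ψ (ν n : ℂ) π - φ (ν n : ℂ) π * ψ' (ν n : ℂ) π) /
            ψ (ν n : ℂ) π :=
  interpolation_relations_general q H φ φ' ψ ψ' μsq νsq μ ν K0 K ωm hq hψ hμspec hνspec hμ hν hμhalf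
    hνhalf hK0 hK
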